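/- arXiv:2502.03205 — 3 statements merged into one kernel-verified Lean document; each statement's English description precedes it below -/
import Mathlib

section
/- Let α, β ∈ [0,∞), T ∈ (0,∞), and let f : [0,T] → [0,∞) be a bounded measurable function satisfying f(t) ≤ α + β (∫₀ᵗ f(s)² ds)^{1/2} for all t ∈ [0,T]. Then for all t ∈ [0,T] it holds that f(t) ≤ √2 · α · e^{β² t}. -/
/-!
Since `(x + y)² ≤ 2x² + 2y²`, squaring the hypothesis gives the linear integral inequality
`f² ≤ 2α² + 2β² ∫₀ᵗ f²`, and the integral form of Grönwall's inequality bounds `f²` by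
`2α² e^{2β² t}`.
-/

open MeasureTheory Set Real intervalIntegral

theorem sq_le_of_le_add_mul_sqrt {x a b y : ℝ} (hx : 0 ≤ x) (hy : 0 ≤ y)
    (h : x ≤ a + b * √y) : x ^ 2 ≤ 2 * a ^ 2 + 2 * b ^ 2 * y := by
  calc x ^ 2 ≤ (a + b * √y) ^ 2 := pow_le_pow_left₀ hx h 2
    _ ≤ 2 * a ^ 2 + 2 * (b * √y) ^ 2 := by nlinarith [sq_nonneg (a - b * √y)]
    _ = 2 * a ^ 2 + 2 * b ^ 2 * y := by rw [mul_pow, sq_sqrt hy, mul_assoc]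

theorem le_mul_exp_of_le_add_mul_integral {u : ℝ → ℝ} {a b c K : ℝ} (hK : 0 ≤ K)
    (hu : IntegrableOn u (Icc a b)) (h : ∀ t ∈ Icc a b, u t ≤ c + K * ∫ s in a..t, u s) :
    ∀ t ∈ Icc a b, u t ≤ c * exp (K * (t - a)) := by
  intro t ht
  have hab : a ≤ b := ht.1.trans ht.2
  set g : ℝ → ℝ := fun t => ∫ s in a..t, u s
  have hg : ContinuousOn g (Icc a b) := by
    rw [← uIcc_of_le hab] at hu ⊢
    exact continuousOn_primitive_interval hu
  -- `g` need not be differentiable, so Grönwall's differential inequality is applied to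
  -- `ψ = c + K ∫ₐᵗ (c + K g)`, which is differentiable and dominates `c + K g` on `[a, b]`
  set φ : ℝ → ℝ := fun s => c + K * g (projIcc a b hab s)
  have hφ : Continuous φ := continuous_const.add <| continuous_const.mul <|
    hg.comp_continuous (continuous_subtype_val.comp continuous_projIcc)
      fun s => (projIcc a b hab s).2
  have hφ_eq : ∀ s ∈ Icc a b, φ s = c + K * g s := fun s hs => by
    simp only [φ, projIcc_of_mem hab hs]
  set ψ : ℝ → ℝ := fun t => c + K * ∫ s in a..t, φ s
  have hψ_deriv : ∀ x, HasDerivAt ψ (K * φ x) x := fun x =>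
    ((hφ.integral_hasStrictDerivAt a x).hasDerivAt.const_mul K).const_add c
  have hgψ : ∀ s ∈ Icc a b, c + K * g s ≤ ψ s := by
    intro s hs
    have hgφ : g s ≤ ∫ r in a..s, φ r :=
      integral_mono_on hs.1 ((intervalIntegrable_iff_integrableOn_Icc_of_le hs.1).2
          (hu.mono_set (Icc_subset_Icc_right hs.2)))
        (hφ.intervalIntegrable a s) fun r hr => by
          rw [hφ_eq r ⟨hr.1, hr.2.trans hs.2⟩]
          exact h r ⟨hr.1, hr.2.trans hs.2⟩
    exact add_le_add_right (mul_le_mul_of_nonneg_left hgφ hK) c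
  have hψ : ∀ s ∈ Icc a b, ψ s ≤ c * exp (K * (s - a)) := by
    simp only [← gronwallBound_ε0]
    refine le_gronwallBound_of_liminf_deriv_right_le (f' := fun s => K * φ s)
      (fun x _ => (hψ_deriv x).continuousAt.continuousWithinAt)
      (fun x _ r hr => (hψ_deriv x).hasDerivWithinAt.liminf_right_slope_le hr)
      (by simp [ψ]) fun x hx => ?_
    rw [hφ_eq x (Ico_subset_Icc_self hx), add_zero]
    exact mul_le_mul_of_nonneg_left (hgψ x (Ico_subset_Icc_self hx)) hK
  calc u t ≤ c + K * g t := h t ht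
    _ ≤ ψ t := hgψ t ht
    _ ≤ c * exp (K * (t - a)) := hψ t ht

theorem stmt_3_general (α β T : ℝ) (hα : 0 ≤ α) (f : ℝ → ℝ)
    (hf_nonneg : ∀ t ∈ Set.Icc (0 : ℝ) T, 0 ≤ f t)
    (hf_meas : Measurable f)
    (hf_bdd : ∃ B : ℝ, ∀ t ∈ Set.Icc (0 : ℝ) T, f t ≤ B)
    (h : ∀ t ∈ Set.Icc (0 : ℝ) T,
      f t ≤ α + β * Real.sqrt (∫ s in (0 : ℝ)..t, (f s) ^ 2)) :
    ∀ t ∈ Set.Icc (0 : ℝ) T, f t ≤ Real.sqrt 2 * α * Real.exp (β ^ 2 * t) := by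
  obtain ⟨B, hB⟩ := hf_bdd
  have hf_sq : IntegrableOn (fun s => f s ^ 2) (Icc 0 T) := by
    refine Measure.integrableOn_of_bounded (M := B ^ 2) measure_Icc_lt_top.ne
      (hf_meas.pow_const 2).aestronglyMeasurable ?_
    filter_upwards [ae_restrict_mem measurableSet_Icc] with s hs
    rw [norm_pow, Real.norm_of_nonneg (hf_nonneg s hs)]
    exact pow_le_pow_left₀ (hf_nonneg s hs) (hB s hs) 2
  have hf_sq_le : ∀ t ∈ Icc 0 T, f t ^ 2 ≤ 2 * α ^ 2 * exp (2 * β ^ 2 * (t - 0)) :=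
    le_mul_exp_of_le_add_mul_integral (by positivity) hf_sq fun t ht =>
      sq_le_of_le_add_mul_sqrt (hf_nonneg t ht)
        (integral_nonneg ht.1 fun s _ => sq_nonneg (f s)) (h t ht)
  intro t ht
  refine le_of_sq_le_sq ?_ (by positivity)
  calc f t ^ 2 ≤ 2 * α ^ 2 * exp (2 * β ^ 2 * (t - 0)) := hf_sq_le t ht
    _ = (√2 * α * exp (β ^ 2 * t)) ^ 2 := by
      rw [mul_pow, mul_pow, sq_sqrt zero_le_two, ← exp_nat_mul]
      ring_nf

theorem stmt_3 (α β T : ℝ) (hα : 0 ≤ α) (hβ : 0 ≤ β) (hT : 0 < T) (f : ℝ → ℝ)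
    (hf_nonneg : ∀ t ∈ Set.Icc (0 : ℝ) T, 0 ≤ f t)
    (hf_meas : Measurable f)
    (hf_bdd : ∃ B : ℝ, ∀ t ∈ Set.Icc (0 : ℝ) T, f t ≤ B)
    (h : ∀ t ∈ Set.Icc (0 : ℝ) T,
      f t ≤ α + β * Real.sqrt (∫ s in (0 : ℝ)..t, (f s) ^ 2)) :
    ∀ t ∈ Set.Icc (0 : ℝ) T, f t ≤ Real.sqrt 2 * α * Real.exp (β ^ 2 * t) :=
  stmt_3_general α β T hα f hf_nonneg hf_meas hf_bdd h
end

section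
/- Let d ∈ ℕ, c ∈ [1,∞), and let μ : ℝᵈ × ℝᵈ → ℝᵈ be measurable with ‖μ(x₁,x₂) − μ(y₁,y₂)‖ ≤ (c/2)‖x₁−y₁‖ + (c/2)‖x₂−y₂‖ for all x₁,x₂,y₁,y₂ ∈ ℝᵈ. Let X, Y : Ω → ℝᵈ be square-integrable random variables and define g(x) = E[μ(x,X)] and h(y) = E[μ(y,Y)]. Then ‖g(X) − h(Y)‖_{L²(ℙ;ℝᵈ)} ≤ c ‖X − Y‖_{L²(ℙ;ℝᵈ)}. -/
/-!
Freezing the first argument, `g x - h y = E[μ(x, X) - μ(y, Y)]`, so Jensen's inequality and the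
Lipschitz bound give `‖g(X) - h(Y)‖ ≤ K₁ ‖X - Y‖ + K₂ E‖X - Y‖` pointwise. Minkowski's inequality
in `L²`, together with `E‖X - Y‖ ≤ ‖X - Y‖_{L²}` on a probability space, turns this into
`‖g(X) - h(Y)‖_{L²} ≤ (K₁ + K₂) ‖X - Y‖_{L²}`; here `K₁ = K₂ = c / 2`.
-/

namespace MeasureTheory

variable {Ω E : Type*} [MeasurableSpace Ω] {P : Measure Ω} [NormedAddCommGroup E]

theorem _root_.LipschitzWith.comp_memLp_of_isFiniteMeasure {F : Type*} [NormedAddCommGroup F]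
    [IsFiniteMeasure P] {p : ENNReal} {K : NNReal} {φ : E → F} (hφ : LipschitzWith K φ) {f : Ω → E}
    (hf : MemLp f p P) : MemLp (φ ∘ f) p P := by
  have h := ((hφ.sub (LipschitzWith.const (φ 0))).comp_memLp (by simp) hf).add
    (memLp_const (φ 0) : MemLp (fun _ => φ 0) p P)
  convert h using 1
  ext ω
  simp

theorem lpNorm_le_lpNorm_of_exponent_le [IsProbabilityMeasure P] {p q : ENNReal} (hpq : p ≤ q)
    {f : Ω → E} (hf : MemLp f q P) : lpNorm f p P ≤ lpNorm f q P := by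
  rw [← toReal_eLpNorm hf.aestronglyMeasurable, ← toReal_eLpNorm hf.aestronglyMeasurable]
  exact ENNReal.toReal_mono hf.eLpNorm_ne_top
    (eLpNorm_le_eLpNorm_of_exponent_le hpq hf.aestronglyMeasurable)

theorem lpNorm_two_eq_sqrt_integral_norm_sq {f : Ω → E} (hf : AEStronglyMeasurable f P) :
    lpNorm f 2 P = √(∫ ω, ‖f ω‖ ^ 2 ∂P) := by
  rw [lpNorm_eq_integral_norm_rpow_toReal two_ne_zero ENNReal.ofNat_ne_top hf,
    Real.sqrt_eq_rpow]
  norm_num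

/-- Unlike `lpNorm_mono_real`, this needs no measurability of `f`. -/
theorem sqrt_integral_norm_sq_le_lpNorm {f : Ω → E} {G : Ω → ℝ} (hG : MemLp G 2 P)
    (hfG : ∀ ω, ‖f ω‖ ≤ G ω) : √(∫ ω, ‖f ω‖ ^ 2 ∂P) ≤ lpNorm G 2 P := by
  rw [lpNorm_two_eq_sqrt_integral_norm_sq hG.aestronglyMeasurable]
  simp only [Real.norm_eq_abs, sq_abs]
  exact Real.sqrt_le_sqrt (integral_mono_of_nonneg (.of_forall fun ω => by positivity)
    hG.integrable_sq (.of_forall fun ω => pow_le_pow_left₀ (norm_nonneg _) (hfG ω) 2))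

theorem lpNorm_mul_norm_add_const_le [IsProbabilityMeasure P] {p : ENNReal} (hp : 1 ≤ p)
    {f : Ω → E} (hf : MemLp f p P) {a b : ℝ} (ha : 0 ≤ a) (hb : 0 ≤ b) :
    lpNorm (fun ω => a * ‖f ω‖ + b) p P ≤ a * lpNorm f p P + b := by
  have hp0 : p ≠ 0 := (zero_lt_one.trans_le hp).ne'
  calc lpNorm (fun ω => a * ‖f ω‖ + b) p P
      ≤ lpNorm (fun ω => a * ‖f ω‖) p P + lpNorm (fun _ => b) p P :=
        lpNorm_add_le (hf.norm.const_mul a) hp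
    _ = a * lpNorm f p P + b := by
        have hsmul : (fun ω => a * ‖f ω‖) = a • fun ω => ‖f ω‖ := rfl
        rw [hsmul, lpNorm_const_smul, lpNorm_norm hf.aestronglyMeasurable,
          lpNorm_const hp0 (IsProbabilityMeasure.ne_zero P)]
        simp [abs_of_nonneg ha, abs_of_nonneg hb]

section LipschitzKernel

variable {F : Type*} [NormedAddCommGroup F] {μ : E → E → F} {K₁ K₂ : ℝ}

theorem integrable_comp_right_of_lipschitz
    (hμ : ∀ x₁ x₂ y₁ y₂, ‖μ x₁ x₂ - μ y₁ y₂‖ ≤ K₁ * ‖x₁ - y₁‖ + K₂ * ‖x₂ - y₂‖)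
    [IsFiniteMeasure P] {X : Ω → E} (hX : Integrable X P) (x : E) :
    Integrable (fun ω => μ x (X ω)) P := by
  have hlip : LipschitzWith (Real.toNNReal K₂) (μ x) := LipschitzWith.of_dist_le' fun a b => by
    simpa [dist_eq_norm] using hμ x a x b
  rw [← memLp_one_iff_integrable] at hX ⊢
  exact hlip.comp_memLp_of_isFiniteMeasure hX

variable [NormedSpace ℝ F]

theorem norm_integral_sub_integral_le
    (hμ : ∀ x₁ x₂ y₁ y₂, ‖μ x₁ x₂ - μ y₁ y₂‖ ≤ K₁ * ‖x₁ - y₁‖ + K₂ * ‖x₂ - y₂‖)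
    [IsProbabilityMeasure P] {X Y : Ω → E} (hX : Integrable X P) (hY : Integrable Y P) (x y : E) :
    ‖∫ ω, μ x (X ω) ∂P - ∫ ω, μ y (Y ω) ∂P‖ ≤ K₁ * ‖x - y‖ + K₂ * ∫ ω, ‖X ω - Y ω‖ ∂P := by
  have hXY : Integrable (fun ω => ‖X ω - Y ω‖) P := (hX.sub hY).norm
  rw [← integral_sub (integrable_comp_right_of_lipschitz hμ hX x)
    (integrable_comp_right_of_lipschitz hμ hY y)]
  calc ‖∫ ω, μ x (X ω) - μ y (Y ω) ∂P‖
      ≤ ∫ ω, ‖μ x (X ω) - μ y (Y ω)‖ ∂P := norm_integral_le_integral_norm _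
    _ ≤ ∫ ω, (K₁ * ‖x - y‖ + K₂ * ‖X ω - Y ω‖) ∂P :=
        integral_mono_of_nonneg (.of_forall fun _ => norm_nonneg _)
          ((integrable_const _).add (hXY.const_mul _)) (.of_forall fun ω => hμ _ _ _ _)
    _ = K₁ * ‖x - y‖ + K₂ * ∫ ω, ‖X ω - Y ω‖ ∂P := by
        rw [integral_add (integrable_const _) (hXY.const_mul _)]
        simp [integral_const_mul]

theorem sqrt_integral_norm_sq_sub_le
    (hμ : ∀ x₁ x₂ y₁ y₂, ‖μ x₁ x₂ - μ y₁ y₂‖ ≤ K₁ * ‖x₁ - y₁‖ + K₂ * ‖x₂ - y₂‖)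
    (hK₁ : 0 ≤ K₁) (hK₂ : 0 ≤ K₂)
    [IsProbabilityMeasure P] {X Y : Ω → E} (hX : MemLp X 2 P) (hY : MemLp Y 2 P) :
    √(∫ ω, ‖∫ ω', μ (X ω) (X ω') ∂P - ∫ ω', μ (Y ω) (Y ω') ∂P‖ ^ 2 ∂P) ≤
      (K₁ + K₂) * √(∫ ω, ‖X ω - Y ω‖ ^ 2 ∂P) := by
  have hXY : MemLp (fun ω => X ω - Y ω) 2 P := hX.sub hY
  rw [← lpNorm_two_eq_sqrt_integral_norm_sq hXY.aestronglyMeasurable]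
  calc _ ≤ lpNorm (fun ω => K₁ * ‖X ω - Y ω‖ + K₂ * lpNorm (fun ω => X ω - Y ω) 1 P) 2 P := by
        refine sqrt_integral_norm_sq_le_lpNorm
          ((hXY.norm.const_mul K₁).add (memLp_const _)) fun ω => ?_
        rw [lpNorm_one_eq_integral_norm hXY.aestronglyMeasurable]
        exact norm_integral_sub_integral_le hμ (hX.integrable one_le_two)
          (hY.integrable one_le_two) _ _
    _ ≤ K₁ * lpNorm (fun ω => X ω - Y ω) 2 P + K₂ * lpNorm (fun ω => X ω - Y ω) 1 P :=
        lpNorm_mul_norm_add_const_le one_le_two hXY hK₁ (mul_nonneg hK₂ lpNorm_nonneg)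
    _ ≤ K₁ * lpNorm (fun ω => X ω - Y ω) 2 P + K₂ * lpNorm (fun ω => X ω - Y ω) 2 P := by
        gcongr
        exact lpNorm_le_lpNorm_of_exponent_le one_le_two hXY
    _ = (K₁ + K₂) * lpNorm (fun ω => X ω - Y ω) 2 P := by ring

end LipschitzKernel

end MeasureTheory

open MeasureTheory

theorem stmt_5_general {Ω : Type*} [MeasurableSpace Ω] (P : MeasureTheory.Measure Ω) [IsProbabilityMeasure P]
    (d : ℕ) (c : ℝ) (hc : 1 ≤ c)
    (μ : EuclideanSpace ℝ (Fin d) → EuclideanSpace ℝ (Fin d) → EuclideanSpace ℝ (Fin d))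
    (hLip : ∀ x₁ x₂ y₁ y₂ : EuclideanSpace ℝ (Fin d),
      ‖μ x₁ x₂ - μ y₁ y₂‖ ≤ c / 2 * ‖x₁ - y₁‖ + c / 2 * ‖x₂ - y₂‖)
    (X Y : Ω → EuclideanSpace ℝ (Fin d))
    (hX : MemLp X 2 P) (hY : MemLp Y 2 P)
    (g h : EuclideanSpace ℝ (Fin d) → EuclideanSpace ℝ (Fin d))
    (hg : ∀ x, g x = ∫ ω : Ω, μ x (X ω) ∂P) (hh : ∀ y, h y = ∫ ω : Ω, μ y (Y ω) ∂P) :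
    Real.sqrt (∫ ω : Ω, ‖g (X ω) - h (Y ω)‖ ^ 2 ∂P) ≤
      c * Real.sqrt (∫ ω : Ω, ‖X ω - Y ω‖ ^ 2 ∂P) := by
  simp only [hg, hh]
  have hc2 : 0 ≤ c / 2 := by linarith
  simpa using sqrt_integral_norm_sq_sub_le hLip hc2 hc2 hX hY

theorem stmt_5 {Ω : Type*} [MeasurableSpace Ω] (P : MeasureTheory.Measure Ω) [IsProbabilityMeasure P]
    (d : ℕ) (c : ℝ) (hc : 1 ≤ c)
    (μ : EuclideanSpace ℝ (Fin d) → EuclideanSpace ℝ (Fin d) → EuclideanSpace ℝ (Fin d))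
    (hμ_meas : Measurable (fun p : EuclideanSpace ℝ (Fin d) × EuclideanSpace ℝ (Fin d) => μ p.1 p.2))
    (hLip : ∀ x₁ x₂ y₁ y₂ : EuclideanSpace ℝ (Fin d),
      ‖μ x₁ x₂ - μ y₁ y₂‖ ≤ c / 2 * ‖x₁ - y₁‖ + c / 2 * ‖x₂ - y₂‖)
    (X Y : Ω → EuclideanSpace ℝ (Fin d)) (hX_meas : Measurable X) (hY_meas : Measurable Y)
    (hX : MemLp X 2 P) (hY : MemLp Y 2 P)
    (g h : EuclideanSpace ℝ (Fin d) → EuclideanSpace ℝ (Fin d))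
    (hg : ∀ x, g x = ∫ ω : Ω, μ x (X ω) ∂P) (hh : ∀ y, h y = ∫ ω : Ω, μ y (Y ω) ∂P) :
    Real.sqrt (∫ ω : Ω, ‖g (X ω) - h (Y ω)‖ ^ 2 ∂P) ≤
      c * Real.sqrt (∫ ω : Ω, ‖X ω - Y ω‖ ^ 2 ∂P) :=
  stmt_5_general P d c hc μ hLip X Y hX hY g h hg hh
end

section
/- Let m ∈ ℕ with m ≥ 2 (or m ≥ 1), c₁, c₂ ∈ [0,∞), and let (a_n)_{n∈ℕ₀} ⊆ [0,∞) satisfy a₀ = 0 and, for all n ∈ ℕ, a_n ≤ c₁ m^{-n} + c₂ n + ∑_{ℓ=1}^{n-1} (2 a_ℓ + 2 a_{ℓ-1}). Then for all n ∈ ℕ it holds that a_n ≤ (3/2) 4ⁿ c₁ + c₂ (4ⁿ − 1). -/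
open Finset

/-!
Since `m⁻ⁿ ≤ 1`, the sequence is a subsolution of the recursion with forcing term `c₁ + c₂ n`.
The recursion is monotone in the earlier terms, so by strong induction it suffices to check that
`bₙ = (3/2) 4ⁿ c₁ + c₂ (4ⁿ - 1)` is a supersolution. Telescoping, this comes down to the one-step
inequality `c₂ + 3 b_{k+1} + 2 b_k ≤ b_{k+2}`, i.e. `5¼ · 4ᵏ⁺¹ ≤ 6 · 4ᵏ⁺¹` for the `c₁`-part and
`3½ · 4ᵏ⁺¹ - 4 ≤ 4ᵏ⁺² - 1` for the `c₂`-part.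
-/

theorem le_of_sub_super_solution {R : Type*} [Semiring R] [PartialOrder R] [IsOrderedRing R]
    {a b f : ℕ → R} (h0 : a 0 ≤ b 0)
    (ha : ∀ n, 1 ≤ n → a n ≤ f n + ∑ ℓ ∈ Ico 1 n, (2 * a ℓ + 2 * a (ℓ - 1)))
    (hb : ∀ n, 1 ≤ n → f n + ∑ ℓ ∈ Ico 1 n, (2 * b ℓ + 2 * b (ℓ - 1)) ≤ b n) (n : ℕ) :
    a n ≤ b n := by
  induction n using Nat.strong_induction_on with
  | _ n ih =>
    rcases Nat.eq_zero_or_pos n with rfl | hn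
    · exact h0
    have hsum : ∑ ℓ ∈ Ico 1 n, (2 * a ℓ + 2 * a (ℓ - 1)) ≤
        ∑ ℓ ∈ Ico 1 n, (2 * b ℓ + 2 * b (ℓ - 1)) := by
      refine sum_le_sum fun ℓ hℓ => ?_
      have hℓn : ℓ < n := (mem_Ico.mp hℓ).2
      have h2 : (0 : R) ≤ 2 := zero_le_two
      gcongr
      exacts [ih ℓ hℓn, ih (ℓ - 1) (by omega)]
    calc a n ≤ f n + ∑ ℓ ∈ Ico 1 n, (2 * a ℓ + 2 * a (ℓ - 1)) := ha n hn
      _ ≤ f n + ∑ ℓ ∈ Ico 1 n, (2 * b ℓ + 2 * b (ℓ - 1)) := by gcongr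
      _ ≤ b n := hb n hn

noncomputable def costBound (c₁ c₂ : ℝ) (n : ℕ) : ℝ := 3 / 2 * 4 ^ n * c₁ + c₂ * (4 ^ n - 1)

section costBound

variable {c₁ c₂ : ℝ}

theorem costBound_nonneg (hc₁ : 0 ≤ c₁) (hc₂ : 0 ≤ c₂) (n : ℕ) : 0 ≤ costBound c₁ c₂ n := by
  have h4 : (1 : ℝ) ≤ 4 ^ n := one_le_pow₀ (by norm_num)
  exact add_nonneg (by positivity) (mul_nonneg hc₂ (by linarith))

theorem costBound_step (hc₁ : 0 ≤ c₁) (hc₂ : 0 ≤ c₂) (k : ℕ) :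
    c₂ + 3 * costBound c₁ c₂ (k + 1) + 2 * costBound c₁ c₂ k ≤ costBound c₁ c₂ (k + 2) := by
  have h4 : (1 : ℝ) ≤ 4 ^ k := one_le_pow₀ (by norm_num)
  simp only [costBound, pow_succ]
  nlinarith

theorem add_add_sum_le_costBound (hc₁ : 0 ≤ c₁) (hc₂ : 0 ≤ c₂) {n : ℕ} (hn : 1 ≤ n) :
    c₁ + c₂ * n + ∑ ℓ ∈ Ico 1 n, (2 * costBound c₁ c₂ ℓ + 2 * costBound c₁ c₂ (ℓ - 1)) ≤
      costBound c₁ c₂ n := by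
  induction n, hn using Nat.le_induction with
  | base => simp only [costBound]; norm_num; linarith
  | succ n hn ih =>
    obtain ⟨k, rfl⟩ : ∃ k, n = k + 1 := ⟨n - 1, by omega⟩
    have hstep := costBound_step hc₁ hc₂ k
    rw [sum_Ico_succ_top hn, Nat.add_sub_cancel]
    push_cast at ih ⊢
    linarith

end costBound

theorem stmt_8_general (m : ℕ) (c₁ c₂ : ℝ) (hc₁ : 0 ≤ c₁) (hc₂ : 0 ≤ c₂)
    (a : ℕ → ℝ) (h0 : a 0 = 0)
    (hrec : ∀ n : ℕ, 1 ≤ n →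
      a n ≤ c₁ * ((m : ℝ) ^ (n : ℕ))⁻¹ + c₂ * n +
        ∑ ℓ ∈ Finset.Ico 1 n, (2 * a ℓ + 2 * a (ℓ - 1))) :
    ∀ n : ℕ, 1 ≤ n → a n ≤ 3 / 2 * 4 ^ n * c₁ + c₂ * (4 ^ n - 1) := by
  have hsub : ∀ n, 1 ≤ n → a n ≤ c₁ + c₂ * n + ∑ ℓ ∈ Ico 1 n, (2 * a ℓ + 2 * a (ℓ - 1)) := by
    intro n hn
    have hinv : ((m : ℝ) ^ n)⁻¹ ≤ 1 := by exact_mod_cast Nat.cast_inv_le_one (m ^ n)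
    have := mul_le_of_le_one_right hc₁ hinv
    linarith [hrec n hn]
  intro n _
  refine le_of_sub_super_solution (f := fun n => c₁ + c₂ * n) (b := costBound c₁ c₂) ?_ hsub
    (fun n hn => add_add_sum_le_costBound hc₁ hc₂ hn) n
  simpa [h0] using costBound_nonneg hc₁ hc₂ 0

theorem stmt_8 (m : ℕ) (hm : 1 ≤ m) (c₁ c₂ : ℝ) (hc₁ : 0 ≤ c₁) (hc₂ : 0 ≤ c₂)
    (a : ℕ → ℝ) (ha : ∀ n, 0 ≤ a n) (h0 : a 0 = 0)
    (hrec : ∀ n : ℕ, 1 ≤ n →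
      a n ≤ c₁ * ((m : ℝ) ^ (n : ℕ))⁻¹ + c₂ * n +
        ∑ ℓ ∈ Finset.Ico 1 n, (2 * a ℓ + 2 * a (ℓ - 1))) :
    ∀ n : ℕ, 1 ≤ n → a n ≤ 3 / 2 * 4 ^ n * c₁ + c₂ * (4 ^ n - 1) :=
  stmt_8_general m c₁ c₂ hc₁ hc₂ a h0 hrec
end
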